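/- arXiv:1904.10911 — 3 statements merged into one kernel-verified Lean document; each statement's English description precedes it below -/
import Mathlib

section
/- Let m be an odd natural number and let A be the 4m × 4m matrix over 𝔽₂ given by the block-diagonal direct sum of m copies of the 4 × 4 companion-type matrix C = !![0,0,0,1; 1,0,0,0; 0,1,0,0; 0,0,1,1]. Then there do not exist matrices P and Q in M_{4m}(𝔽₂) with P² = P, Q³ = 0, and A = P + Q. -/
/-!
If `A = P + Q` with `P` idempotent, `Q³ = 0` and `A⁴ = A³ + 1`, then `tr (A³)` is even over any
commutative ring: expand `tr ((A - P)³) = 0` and `tr ((A - P)³ · AP) = 0` by cyclicity of the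
trace, use `A⁴P = A³P + P` in the second, and the sum of the two identities reads
`tr (A³) = 2 · (…)`. Over `𝔽₂` this forces `tr (A³) = 0`, whereas `C⁴ = C³ + 1` and `tr (C³) = 1`,
so the direct sum of an odd number `m` of copies of `C` has `tr (A³) = m = 1`.
-/

namespace Matrix

section TraceIdentities

variable {n R : Type*} [Fintype n] [DecidableEq n] [CommRing R] {A P Q : Matrix n n R}

theorem trace_sub_idempotent_pow_three (hP : IsIdempotentElem P) :
    trace ((A - P) ^ 3) = trace (A ^ 3) - 3 * trace (A ^ 2 * P) + 3 * trace (A * P) - trace P := by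
  have hPP : P * P = P := hP
  have expand : (A - P) ^ 3 = A ^ 3 - (A ^ 2 * P + A * P * A + P * A ^ 2)
      + (A * (P * P) + P * A * P + P * P * A) - P * P * P := by noncomm_ring
  have hAPA : trace (A * P * A) = trace (A ^ 2 * P) := by
    rw [trace_mul_comm, ← mul_assoc, sq]
  have hPAA : trace (P * A ^ 2) = trace (A ^ 2 * P) := trace_mul_comm _ _
  have hPAP : trace (P * A * P) = trace (A * P) := by
    rw [trace_mul_comm, ← mul_assoc, hPP, trace_mul_comm]
  have hPA : trace (P * A) = trace (A * P) := trace_mul_comm _ _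
  rw [expand, hPP, hPP]
  simp only [trace_add, trace_sub, hAPA, hPAA, hPAP, hPA]
  ring

theorem trace_sub_idempotent_pow_three_mul (hP : IsIdempotentElem P) :
    trace ((A - P) ^ 3 * (A * P)) = trace (A ^ 4 * P) - trace (A ^ 3 * P)
      - 2 * trace (A ^ 2 * P * A * P) + 2 * trace (A * P * A * P)
      + trace (A ^ 2 * P) - trace (A * P) := by
  have hPP : P * P = P := hP
  have expand : (A - P) ^ 3 * (A * P) = A ^ 4 * P - (A ^ 2 * P * A * P + A * P * A ^ 2 * P
      + P * A ^ 3 * P) + (A * (P * P) * A * P + P * (A * P * A * P) + P * P * (A ^ 2 * P))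
      - P * P * P * (A * P) := by noncomm_ring
  have hAPAAP : trace (A * P * A ^ 2 * P) = trace (A ^ 2 * P * A * P) := by
    rw [show A * P * A ^ 2 * P = (A * P) * (A ^ 2 * P) by noncomm_ring, trace_mul_comm,
      ← mul_assoc]
  have trace_P_mul_mul_P : ∀ M : Matrix n n R, trace (P * (M * P)) = trace (M * P) := fun M => by
    rw [trace_mul_comm, mul_assoc, hPP]
  have hPAAAP : trace (P * A ^ 3 * P) = trace (A ^ 3 * P) := by
    rw [mul_assoc, trace_P_mul_mul_P]
  rw [expand]
  simp only [hPP, trace_add, trace_sub, hAPAAP, hPAAAP, trace_P_mul_mul_P]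
  ring

theorem even_trace_pow_three_of_eq_idempotent_add (hA : A ^ 4 = A ^ 3 + 1)
    (hP : IsIdempotentElem P) (hQ : Q ^ 3 = 0) (hPQ : A = P + Q) : Even (trace (A ^ 3)) := by
  obtain rfl : Q = A - P := by rw [hPQ, add_sub_cancel_left]
  have h₁ := trace_sub_idempotent_pow_three (A := A) hP
  have h₂ := trace_sub_idempotent_pow_three_mul (A := A) hP
  rw [hQ, trace_zero] at h₁
  rw [hQ, zero_mul, trace_zero, hA, add_mul, one_mul, trace_add] at h₂
  exact ⟨trace (A ^ 2 * P) - trace (A * P) + trace (A ^ 2 * P * A * P)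
    - trace (A * P * A * P), by linear_combination -(h₁ + h₂)⟩

end TraceIdentities

section BlockDiagonalCopies

variable {l m n R : Type*} [Fintype l] [Fintype m] [Fintype n] [CommSemiring R]

theorem trace_reindex (e : m ≃ n) (M : Matrix m m R) : trace (reindex e e M) = trace M :=
  Fintype.sum_equiv e.symm _ _ fun _ => rfl

variable [DecidableEq l] [DecidableEq m] [DecidableEq n]

variable (l R) in
def blockDiagonalCopies (e : m × l ≃ n) : Matrix m m R →+* Matrix n n R :=
  (reindexAlgEquiv R R e).toRingHom.comp
    ((blockDiagonalRingHom m l R).comp (Pi.constRingHom l _))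

theorem blockDiagonalCopies_apply (e : m × l ≃ n) (M : Matrix m m R) :
    blockDiagonalCopies l R e M = reindex e e (blockDiagonal fun _ : l => M) :=
  rfl

theorem trace_blockDiagonalCopies (e : m × l ≃ n) (M : Matrix m m R) :
    trace (blockDiagonalCopies l R e M) = Fintype.card l • trace M := by
  rw [blockDiagonalCopies_apply, trace_reindex, trace_blockDiagonal, Finset.sum_const,
    Finset.card_univ]

end BlockDiagonalCopies

end Matrix

open Matrix

theorem stmt_0 (m : ℕ) (hm : Odd m)
    (C : Matrix (Fin 4) (Fin 4) (ZMod 2))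
    (hC : C = !![0,0,0,1; 1,0,0,0; 0,1,0,0; 0,0,1,1])
    (A : Matrix (Fin (4 * m)) (Fin (4 * m)) (ZMod 2))
    (hA : A = Matrix.reindex finProdFinEquiv finProdFinEquiv
      (Matrix.blockDiagonal (fun _ : Fin m => C))) :
    ¬ ∃ P Q : Matrix (Fin (4 * m)) (Fin (4 * m)) (ZMod 2),
      P ^ 2 = P ∧ Q ^ 3 = 0 ∧ A = P + Q := by
  rintro ⟨P, Q, hP, hQ, hPQ⟩
  rw [← blockDiagonalCopies_apply] at hA
  have hC4 : C ^ 4 = C ^ 3 + 1 := by subst hC; decide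
  have hA4 : A ^ 4 = A ^ 3 + 1 := by rw [hA, ← map_pow, hC4, map_add, map_pow, map_one]
  have htrace : trace (A ^ 3) = 1 := by
    rw [hA, ← map_pow, trace_blockDiagonalCopies, Fintype.card_fin, nsmul_eq_mul,
      hm.natCast_zmod_two, one_mul, hC]
    decide
  have heven := even_trace_pow_three_of_eq_idempotent_add hA4 ((sq P).symm.trans hP) hQ hPQ
  rw [htrace] at heven
  exact absurd heven (by decide : ¬ ∃ r : ZMod 2, 1 = r + r)
end

section
/- Let P, Q ∈ M_n(𝔽₂) satisfy P² = P, Q³ = 0, and (P+Q)⁴ + (P+Q)³ = 1 (where 1 is the identity matrix). Then the corank of P, i.e., n − rank(P), is an even number. -/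
lemma aux_identity {R : Type*} [Ring R] (e b : R) (he : e * e = e) :
    (e*b*b*e)*(e*b*e) + (e*b*e)*(e*b*b*e) + 6*((e*b*e)*(e*b*e)) + 6*(e*b*e) + 3*e
      = e*((b+e)^3)*b*e + 4*(e*((b+e)^3)*e)
        - e*(b^4 + 5*b^3 + 9*b^2 + 7*b + 1)*e := by
  have he1 : ∀ x : R, e * (e * x) = e * x := fun x => by rw [← mul_assoc, he]
  simp only [pow_succ, pow_zero, one_mul, mul_add, add_mul, mul_assoc, he, he1,
    sub_eq_add_neg, neg_add, neg_mul, mul_neg, mul_one]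
  noncomm_ring

lemma trace_idem {n : ℕ} (P : Matrix (Fin n) (Fin n) (ZMod 2)) (hP : P * P = P) :
    P.trace = (P.rank : ZMod 2) := by
  classical
  set f := P.mulVecLin with hf_def
  have hff : f ∘ₗ f = f := by
    rw [hf_def, ← Matrix.mulVecLin_mul, hP]
  have hproj : LinearMap.IsProj (LinearMap.range f) f := by
    refine ⟨fun x => LinearMap.mem_range_self f x, ?_⟩
    rintro x ⟨y, rfl⟩
    rw [← LinearMap.comp_apply, hff]
  have htr := hproj.trace
  have h1 : LinearMap.trace (ZMod 2) (Fin n → ZMod 2) f = P.trace := by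
    rw [LinearMap.trace_eq_matrix_trace (ZMod 2) (Pi.basisFun (ZMod 2) (Fin n)) f]
    congr 1
    rw [LinearMap.toMatrix_eq_toMatrix']
    rw [hf_def, ← Matrix.toLin'_apply', LinearMap.toMatrix'_toLin']
  rw [h1] at htr
  rw [htr, Matrix.rank]

theorem stmt_4 (n : ℕ) (P Q : Matrix (Fin n) (Fin n) (ZMod 2))
    (hP : P ^ 2 = P) (hQ : Q ^ 3 = 0)
    (hPQ : (P + Q) ^ 4 + (P + Q) ^ 3 = 1) :
    Even (n - P.rank) := by
  classical
  have hPP : P * P = P := by rw [← sq]; exact hP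
  set e : Matrix (Fin n) (Fin n) (ZMod 2) := 1 - P with he_def
  set b : Matrix (Fin n) (Fin n) (ZMod 2) := P + Q - 1 with hb_def
  have he : e * e = e := by
    have h1 : e * e = 1 - P - P + P * P := by rw [he_def]; noncomm_ring
    rw [h1, hPP, he_def]; abel
  have hbe : b + e = Q := by rw [hb_def, he_def]; abel
  have hb3 : (b + e) ^ 3 = 0 := by rw [hbe]; exact hQ
  have hA : b + 1 = P + Q := by rw [hb_def]; abel
  have hpoly : b ^ 4 + 5 * b ^ 3 + 9 * b ^ 2 + 7 * b + 1 = 0 := by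
    have h2 : b ^ 4 + 5 * b ^ 3 + 9 * b ^ 2 + 7 * b + 1
        = ((b + 1) ^ 4 + (b + 1) ^ 3) - 1 := by noncomm_ring
    rw [h2, hA, hPQ, sub_self]
  have key := aux_identity e b he
  rw [hb3, hpoly] at key
  simp only [Matrix.zero_mul, Matrix.mul_zero, mul_zero, zero_mul, mul_one, add_zero,
    zero_add, sub_zero, zero_sub, mul_zero] at key
  have h2m : (2 : Matrix (Fin n) (Fin n) (ZMod 2)) = 0 := by
    have h12 : (2 : Matrix (Fin n) (Fin n) (ZMod 2)) = 1 + 1 := by norm_num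
    rw [h12]
    ext i j
    by_cases h : i = j
    · subst h; simp [Matrix.one_apply]; decide
    · simp [Matrix.one_apply, h]
  have h6m : (6 : Matrix (Fin n) (Fin n) (ZMod 2)) = 0 := by
    have h : (6 : Matrix (Fin n) (Fin n) (ZMod 2)) = 2 * 3 := by norm_num
    rw [h, h2m, zero_mul]
  have h3m : (3 : Matrix (Fin n) (Fin n) (ZMod 2)) = 1 := by
    have h : (3 : Matrix (Fin n) (Fin n) (ZMod 2)) = 2 + 1 := by norm_num
    rw [h, h2m, zero_add]
  rw [h6m, h3m] at key
  simp only [zero_mul, one_mul, add_zero, zero_add] at key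
  -- key : e*b*b*e*(e*b*e) + e*b*e*(e*b*b*e) + e = 0
  have hk := congrArg Matrix.trace key
  simp only [Matrix.trace_add, Matrix.trace_zero] at hk
  rw [Matrix.trace_mul_comm (e * b * b * e) (e * b * e)] at hk
  rw [CharTwo.add_self_eq_zero, zero_add] at hk
  -- hk : trace e = 0
  rw [he_def, Matrix.trace_sub, Matrix.trace_one] at hk
  simp only [Fintype.card_fin] at hk
  have htrP : (P.rank : ZMod 2) = (n : ZMod 2) := by
    rw [← trace_idem P hPP]
    have := sub_eq_zero.mp hk
    exact (this.symm)
  have hle : P.rank ≤ n := by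
    simpa using P.rank_le_card_width
  have hcast : ((n - P.rank : ℕ) : ZMod 2) = 0 := by
    rw [Nat.cast_sub hle, htrP, sub_self]
  have hdvd : 2 ∣ (n - P.rank) := by
    exact (ZMod.natCast_eq_zero_iff _ _).mp hcast
  exact even_iff_two_dvd.mpr hdvd
end

section
/- For every natural number k, the matrix ring M_{8k+4}(𝔽₂) is not nil-clean of index at most 3; that is, there exists a matrix A ∈ M_{8k+4}(𝔽₂) such that there are no P, Q ∈ M_{8k+4}(𝔽₂) with P² = P, Q³ = 0, and A = P + Q. -/
/-!
Let `A = P + Q` with `P² = P` and `Q³ = 0`, so `Q = A - P`. Expanding `P A Q³` and using the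
cyclicity of the trace, the cross terms pair up, so in characteristic 2
`tr (P A Q³) = tr (P (A + A² + A³ + A⁴))`. If `Φ₅(A) = A⁴ + A³ + A² + A + 1 = 0`, the right
side is `tr P`, hence `tr P = 0`; as `Q` is nilpotent, also `tr Q = 0`, so `tr A = 0`. Over
`𝔽₂`, the block-diagonal matrix made of `2k + 1` copies of the companion matrix of `Φ₅`
satisfies `Φ₅(A) = 0` and has trace `2k + 1 = 1`.
-/

open Matrix

def IsNilCleanOfIndexLE {S : Type*} [Semiring S] (k : ℕ) (a : S) : Prop :=
  ∃ p q : S, p ^ 2 = p ∧ q ^ k = 0 ∧ a = p + q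

lemma IsNilCleanOfIndexLE.map {F S T : Type*} [Semiring S] [Semiring T] [FunLike F S T]
    [RingHomClass F S T] (f : F) {k : ℕ} {a : S} (h : IsNilCleanOfIndexLE k a) :
    IsNilCleanOfIndexLE k (f a) := by
  obtain ⟨p, q, hp, hq, rfl⟩ := h
  exact ⟨f p, f q, by rw [← map_pow, hp], by rw [← map_pow, hq, map_zero], map_add f p q⟩

section Trace

variable {n R : Type*} [Fintype n] [CommRing R]

lemma IsIdempotentElem.trace_mul_mul_self {P : Matrix n n R} (hP : IsIdempotentElem P)
    (X : Matrix n n R) : trace (P * X * P) = trace (P * X) := by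
  rw [trace_mul_comm, ← mul_assoc, hP.eq]

lemma IsIdempotentElem.trace_mul_mul_sub_pow_three [DecidableEq n] {P : Matrix n n R}
    (hP : IsIdempotentElem P) (A : Matrix n n R) :
    trace (P * A * (A - P) ^ 3) =
      trace (P * (A ^ 4 - A ^ 3 + A ^ 2 - A)) +
        2 * (trace (P * A * P * A) - trace (P * A * P * A ^ 2)) := by
  have expand : P * A * (A - P) ^ 3 =
      P * A ^ 4 - P * A ^ 3 * P - P * A ^ 2 * (P * A) + P * A ^ 2 * (P * P)
        - P * A * P * A ^ 2 + P * (A * P * A) * P + P * A * (P * P) * A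
        - P * A * (P * P * P) := by
    noncomm_ring
  have rotate : trace (P * A ^ 2 * (P * A)) = trace (P * A * P * A ^ 2) := by
    rw [trace_mul_comm, ← mul_assoc]
  rw [expand]
  simp only [trace_add, trace_sub, hP.eq, hP.trace_mul_mul_self, rotate, mul_add, mul_sub]
  simp only [mul_assoc]
  ring

lemma trace_eq_zero_of_isNilCleanOfIndexLE_three [DecidableEq n] [IsReduced R] [CharP R 2]
    {A : Matrix n n R} (hA : A ^ 4 + A ^ 3 + A ^ 2 + A + 1 = 0) (h : IsNilCleanOfIndexLE 3 A) :
    trace A = 0 := by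
  obtain ⟨P, Q, hP, hQ, hPQ⟩ := h
  obtain rfl : Q = A - P := eq_sub_of_add_eq' hPQ.symm
  have hP_trace : trace P = 0 := by
    have key :=
      IsIdempotentElem.trace_mul_mul_sub_pow_three ((pow_two P).symm.trans hP) A
    rw [hQ, mul_zero, trace_zero] at key
    have hΦ := congrArg (fun X => trace (P * X)) hA
    simp only [mul_add, mul_sub, mul_zero, mul_one, trace_add, trace_sub, trace_zero] at hΦ key
    linear_combination hΦ + key
      + (trace (P * A * P * A) - trace (P * A * P * A ^ 2) - trace (P * A ^ 3) - trace (P * A))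
        * CharTwo.two_eq_zero (R := R)
  have hQ_trace : trace (A - P) = 0 := (isNilpotent_trace_of_isNilpotent ⟨3, hQ⟩).eq_zero
  rwa [trace_sub, hP_trace, sub_zero] at hQ_trace

end Trace

def cyclotomicFiveCompanion : Matrix (Fin 4) (Fin 4) (ZMod 2) :=
  !![0, 0, 0, 1; 1, 0, 0, 1; 0, 1, 0, 1; 0, 0, 1, 1]

lemma cyclotomicFiveCompanion_pow_add : cyclotomicFiveCompanion ^ 4 + cyclotomicFiveCompanion ^ 3 +
    cyclotomicFiveCompanion ^ 2 + cyclotomicFiveCompanion + 1 = 0 := by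
  decide

lemma trace_cyclotomicFiveCompanion : trace cyclotomicFiveCompanion = 1 := by
  decide

theorem stmt_6 (k : ℕ) :
    ∃ A : Matrix (Fin (8 * k + 4)) (Fin (8 * k + 4)) (ZMod 2),
      ¬ ∃ P Q : Matrix (Fin (8 * k + 4)) (Fin (8 * k + 4)) (ZMod 2),
        P ^ 2 = P ∧ Q ^ 3 = 0 ∧ A = P + Q := by
  let e : Fin 4 × Fin (2 * k + 1) ≃ Fin (8 * k + 4) := finProdFinEquiv.trans (finCongr (by ring))
  let φ := reindexAlgEquiv (ZMod 2) (ZMod 2) e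
  let A := blockDiagonal fun _ : Fin (2 * k + 1) => cyclotomicFiveCompanion
  have hA : A ^ 4 + A ^ 3 + A ^ 2 + A + 1 = 0 := by
    simp only [A, ← blockDiagonal_pow, ← blockDiagonal_one, ← blockDiagonal_add]
    exact (congrArg blockDiagonal (funext fun _ => cyclotomicFiveCompanion_pow_add)).trans
      blockDiagonal_zero
  have htrace : trace A = 1 := by
    simp only [A, trace_blockDiagonal, trace_cyclotomicFiveCompanion, Finset.sum_const,
      Finset.card_univ, Fintype.card_fin, nsmul_eq_mul, mul_one]
    exact (odd_two_mul_add_one k).natCast_zmod_two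
  refine ⟨φ A, fun h => ?_⟩
  have hA_nilClean : IsNilCleanOfIndexLE 3 A := by
    simpa only [AlgEquiv.symm_apply_apply] using IsNilCleanOfIndexLE.map φ.symm h
  exact one_ne_zero (htrace ▸ trace_eq_zero_of_isNilCleanOfIndexLE_three hA hA_nilClean)
end
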